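/- arXiv:2104.05262 — 6 statements merged into one kernel-verified Lean document; each statement's English description precedes it below -/
import Mathlib

section
/- Left-composition in saturated graphs: if Ω is prefix-independent with neutral letter 0, G is saturated with respect to Ω, (v,0,v') ∈ E(G), and (v',c,v'') ∈ E(G), then (v,c,v'') ∈ E(G). -/
/-- A graph satisfies objective `Ω` if every infinite path's colour word is in `Ω`. -/
def Satisfies {V C : Type*} (E : V → C → V → Prop) (Ω : Set (ℕ → C)) : Prop :=
  ∀ (π : ℕ → V) (w : ℕ → C), (∀ i, E (π i) (w i) (π (i + 1))) → w ∈ Ω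

/-- A graph is saturated w.r.t. `Ω` if it satisfies `Ω` and adding any missing edge
produces a graph not satisfying `Ω`. -/
def Saturated {V C : Type*} (E : V → C → V → Prop) (Ω : Set (ℕ → C)) : Prop :=
  Satisfies E Ω ∧
  ∀ v c v', ¬ E v c v' →
    ¬ Satisfies (fun a b b' => E a b b' ∨ (a = v ∧ b = c ∧ b' = v')) Ω

/-- Prepend a finite word to an infinite word. -/
def Prepend {C : Type*} (u : List C) (w : ℕ → C) : ℕ → C :=
  fun i => if h : i < u.length then u.get ⟨i, h⟩ else w (i - u.length)

/-- `Ω` is prefix-independent. -/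
def PrefixIndependent {C : Type*} (Ω : Set (ℕ → C)) : Prop :=
  ∀ (u : List C) (w : ℕ → C), Prepend u w ∈ Ω ↔ w ∈ Ω

/-- `z` is a neutral letter for `Ω`: words with finitely many non-`z` letters are in `Ω`,
and otherwise membership in `Ω` only depends on the projection onto the non-`z` letters
(enumerated in order by a strictly monotone `f`). -/
def Neutral {C : Type*} (z : C) (Ω : Set (ℕ → C)) : Prop :=
  ∀ w : ℕ → C,
    ({i | w i ≠ z}.Finite → w ∈ Ω) ∧
    (∀ f : ℕ → ℕ, StrictMono f → (∀ i, w i ≠ z ↔ ∃ j, f j = i) →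
      (w ∈ Ω ↔ (fun j => w (f j)) ∈ Ω))



def stAux (b : ℕ → Bool) : ℕ → ℕ × Bool
  | 0 => (0, false)
  | k+1 => match stAux b k with
    | (i, false) => if b i then (i+1, false) else (i, true)
    | (i, true) => (i+1, false)

def gAux (b : ℕ → Bool) : ℕ → ℕ
  | 0 => 0
  | i+1 => gAux b i + (if b i then 1 else 2)

def hAux (b : ℕ → Bool) (i : ℕ) : ℕ := gAux b i + (if b i then 0 else 1)

lemma stAux_gAux (b : ℕ → Bool) : ∀ i, stAux b (gAux b i) = (i, false) := by
  intro i
  induction i with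
  | zero => rfl
  | succ i ih =>
      by_cases hb : b i
      · have hg : gAux b (i+1) = gAux b i + 1 := by simp [gAux, hb]
        rw [hg, stAux, ih]
        simp [hb]
      · have hg : gAux b (i+1) = (gAux b i + 1) + 1 := by simp [gAux, hb]
        rw [hg, stAux, stAux, ih]
        simp [hb]

lemma stAux_inv (b : ℕ → Bool) : ∀ k i,
    (stAux b k = (i, false) → k = gAux b i) ∧
    (stAux b k = (i, true) → b i = false ∧ k = gAux b i + 1) := by
  intro k
  induction k with
  | zero =>
      intro i
      refine ⟨fun h => ?_, fun h => ?_⟩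
      · have h1 : (0 : ℕ) = i := congrArg Prod.fst h
        simp [← h1, gAux]
      · have h2 : false = true := congrArg Prod.snd h
        simp at h2
  | succ k ih =>
      intro i
      rcases hst : stAux b k with ⟨j, s⟩
      cases s with
      | false =>
          by_cases hb : b j
          · have hstep : stAux b (k+1) = (j+1, false) := by rw [stAux, hst]; simp [hb]
            refine ⟨fun h => ?_, fun h => ?_⟩
            · rw [hstep] at h
              have hij : j + 1 = i := congrArg Prod.fst h
              have hk : k = gAux b j := (ih j).1 hst
              subst hij
              simp [gAux, hb, hk]
            · rw [hstep] at h
              have : false = true := congrArg Prod.snd h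
              simp at this
          · have hstep : stAux b (k+1) = (j, true) := by rw [stAux, hst]; simp [hb]
            refine ⟨fun h => ?_, fun h => ?_⟩
            · rw [hstep] at h
              have : true = false := congrArg Prod.snd h
              simp at this
            · rw [hstep] at h
              have hij : j = i := congrArg Prod.fst h
              have hk : k = gAux b j := (ih j).1 hst
              subst hij
              exact ⟨by simpa using hb, by omega⟩
      | true =>
          have hstep : stAux b (k+1) = (j+1, false) := by rw [stAux, hst]
          obtain ⟨hbj, hk⟩ := (ih j).2 hst
          refine ⟨fun h => ?_, fun h => ?_⟩
          · rw [hstep] at h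
            have hij : j + 1 = i := congrArg Prod.fst h
            subst hij
            simp [gAux, hbj]
            omega
          · rw [hstep] at h
            have : false = true := congrArg Prod.snd h
            simp at this

lemma stAux_hAux (b : ℕ → Bool) (i : ℕ) : stAux b (hAux b i) = (i, !(b i)) := by
  by_cases hb : b i
  · have : hAux b i = gAux b i := by simp [hAux, hb]
    rw [this, stAux_gAux]
    simp [hb]
  · have : hAux b i = gAux b i + 1 := by simp [hAux, hb]
    rw [this, stAux, stAux_gAux]
    simp [hb]

lemma hAux_strictMono (b : ℕ → Bool) : StrictMono (hAux b) := by
  apply strictMono_nat_of_lt_succ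
  intro i
  simp only [hAux, gAux]
  by_cases hb : b i <;> simp [hb] <;> omega

/-- left composition in saturated graphs. -/
theorem saturated_left_composition {V C : Type*} (Ω : Set (ℕ → C)) (z : C)
    (hpi : PrefixIndependent Ω) (hz : Neutral z Ω)
    (E : V → C → V → Prop) (hsat : Saturated E Ω)
    (v v' v'' : V) (c : C) (h1 : E v z v') (h2 : E v' c v'') :
    E v c v'' := by
  by_contra hnot
  have hbad := hsat.2 v c v'' hnot
  rw [Satisfies] at hbad
  push_neg at hbad
  obtain ⟨π, w, hpath, hwΩ⟩ := hbad
  classical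
  -- b i = true iff step i is a real edge of E
  set b : ℕ → Bool := fun i => decide (E (π i) (w i) (π (i+1))) with hb_def
  have hb_true : ∀ i, b i = true ↔ E (π i) (w i) (π (i+1)) := by
    intro i; simp [hb_def]
  have hb_false : ∀ i, b i = false → π i = v ∧ w i = c ∧ π (i+1) = v'' := by
    intro i hbi
    rcases hpath i with hE | hnew
    · exact absurd hE (by simpa [hb_def] using hbi)
    · exact hnew
  -- expanded path and word
  set π' : ℕ → V := fun k => if (stAux b k).2 then v' else π (stAux b k).1 with hπ'
  set w' : ℕ → C := fun k =>
    if (stAux b k).2 then w (stAux b k).1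
    else (if b (stAux b k).1 then w (stAux b k).1 else z) with hw'
  have hpath' : ∀ k, E (π' k) (w' k) (π' (k+1)) := by
    intro k
    rcases hst : stAux b k with ⟨i, s⟩
    cases s with
    | false =>
        by_cases hbi : b i
        · have hstep : stAux b (k+1) = (i+1, false) := by rw [stAux, hst]; simp [hbi]
          simp only [hπ', hw', hst, hstep, hbi]
          simpa using (hb_true i).1 hbi
        · have hstep : stAux b (k+1) = (i, true) := by rw [stAux, hst]; simp [hbi]
          obtain ⟨hv, _, _⟩ := hb_false i (by simpa using hbi)
          simp only [hπ', hw', hst, hstep, hbi]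
          simpa [hv] using h1
    | true =>
        have hstep : stAux b (k+1) = (i+1, false) := by rw [stAux, hst]
        obtain ⟨hbi, _⟩ := (stAux_inv b k i).2 hst
        obtain ⟨_, hc, hv''⟩ := hb_false i hbi
        simp only [hπ', hw', hst, hstep]
        simpa [hc, hv''] using h2
  have hw'Ω : w' ∈ Ω := hsat.1 π' w' hpath'
  -- the expanded word agrees with w at positions hAux b i
  have hw'h : ∀ i, w' (hAux b i) = w i := by
    intro i
    have := stAux_hAux b i
    by_cases hbi : b i <;> simp [hw', this, hbi]
  -- finite case
  by_cases hfin : {i | w i ≠ z}.Finite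
  · exact hwΩ ((hz w).1 hfin)
  -- infinite case: enumerate the non-z positions of w
  set p : ℕ → Prop := fun i => w i ≠ z with hp
  have hpinf : (setOf p).Infinite := hfin
  set f : ℕ → ℕ := Nat.nth p with hf
  have hfmono : StrictMono f := Nat.nth_strictMono hpinf
  have hfchar : ∀ i, w i ≠ z ↔ ∃ j, f j = i := by
    intro i
    constructor
    · intro hi
      exact ⟨Nat.count p i, Nat.nth_count hi⟩
    · rintro ⟨j, rfl⟩
      exact Nat.nth_mem_of_infinite hpinf j
  have hfp : ∀ j, w (f j) ≠ z := fun j => Nat.nth_mem_of_infinite hpinf j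
  -- characterization of non-z positions of w'
  set f' : ℕ → ℕ := fun j => hAux b (f j) with hf'
  have hf'mono : StrictMono f' := (hAux_strictMono b).comp hfmono
  have hf'char : ∀ k, w' k ≠ z ↔ ∃ j, f' j = k := by
    intro k
    constructor
    · intro hk
      rcases hst : stAux b k with ⟨i, s⟩
      cases s with
      | false =>
          have hk' : k = gAux b i := (stAux_inv b k i).1 hst
          by_cases hbi : b i
          · have hwi : w i ≠ z := by simpa [hw', hst, hbi] using hk
            obtain ⟨j, hj⟩ := (hfchar i).1 hwi
            exact ⟨j, by simp [hf', hj, hAux, hbi, hk']⟩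
          · exact absurd (by simp [hw', hst, hbi] : w' k = z) hk
      | true =>
          obtain ⟨hbi, hk'⟩ := (stAux_inv b k i).2 hst
          have hwi : w i ≠ z := by simpa [hw', hst] using hk
          obtain ⟨j, hj⟩ := (hfchar i).1 hwi
          exact ⟨j, by simp [hf', hj, hAux, hbi]; omega⟩
    · rintro ⟨j, rfl⟩
      rw [hw'h (f j)]
      exact hfp j
  have e1 : w' ∈ Ω ↔ (fun j => w' (f' j)) ∈ Ω := (hz w').2 f' hf'mono hf'char
  have e2 : w ∈ Ω ↔ (fun j => w (f j)) ∈ Ω := (hz w).2 f hfmono hfchar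
  have hag : (fun j => w' (f' j)) = (fun j => w (f j)) := by
    funext j; exact hw'h (f j)
  apply hwΩ
  rw [e2, ← hag, ← e1]
  exact hw'Ω
end

section
/- The sequence uₙ defined by u₀ = (), u₁ = (1), and uₙ = u_{⌊n/2⌋} ++ (n) ++ u_{n−1−⌊n/2⌋} is n-universal: every sequence of positive integers of total sum at most n embeds into uₙ. -/
/-- The universal sequence `uSeq n`: `u 0 = ()`, `u 1 = (1)`,
`u n = u ⌊n/2⌋ ++ (n) ++ u (n - 1 - ⌊n/2⌋)`. -/
def uSeq : ℕ → List ℕ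
  | 0 => []
  | 1 => [1]
  | (n + 2) =>
      uSeq ((n + 2) / 2) ++ [n + 2] ++ uSeq ((n + 2) - 1 - (n + 2) / 2)
  decreasing_by all_goals omega

lemma uSeq_split (v : List ℕ) : ∀ m : ℕ, m < v.sum →
    ∃ a x b, v = a ++ x :: b ∧ a.sum ≤ m ∧ m < a.sum + x := by
  induction v with
  | nil => intro m hm; simp at hm
  | cons y t ih =>
    intro m hm
    by_cases hy : m < y
    · exact ⟨[], y, t, rfl, by simp, by simpa using hy⟩
    · have h' : m - y < t.sum := by simp [List.sum_cons] at hm; omega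
      obtain ⟨a, x, b, heq, h1, h2⟩ := ih (m - y) h'
      exact ⟨y :: a, x, b, by simp [heq], by simp [List.sum_cons]; omega,
        by simp [List.sum_cons]; omega⟩

/-- `uSeq n` is `n`-universal: every sequence of positive integers of
total sum at most `n` embeds into it (there is an entrywise-dominating sublist). -/
theorem uSeq_universal (n : ℕ) (v : List ℕ) (hpos : ∀ x ∈ v, 0 < x)
    (hsum : v.sum ≤ n) :
    ∃ w : List ℕ, List.Forall₂ (· ≤ ·) v w ∧ w.Sublist (uSeq n) := by
  induction n using Nat.strong_induction_on generalizing v with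
  | _ n ih =>
    match v, n with
    | [], n => exact ⟨[], List.Forall₂.nil, (uSeq n).nil_sublist⟩
    | y :: t, n =>
      have hy : 0 < y := hpos y (by simp)
      have hsum' : 1 ≤ (y :: t).sum := by
        simp [List.sum_cons]; omega
      match n with
      | 0 => omega
      | 1 =>
        have ht : t = [] := by
          have : ∀ x ∈ t, 0 < x := fun x hx => hpos x (by simp [hx])
          cases t with
          | nil => rfl
          | cons z s =>
            have hz : 0 < z := this z (by simp)
            simp [List.sum_cons] at hsum; omega
        subst ht
        refine ⟨[1], ?_, by simp [uSeq]⟩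
        simp [List.sum_cons] at hsum
        exact List.Forall₂.cons (by omega) List.Forall₂.nil
      | (k + 2) =>
        set m := (k + 2) / 2 with hm
        set r := (k + 2) - 1 - m with hr
        have hmlt : m < k + 2 := by omega
        have hrlt : r < k + 2 := by omega
        by_cases hc : (y :: t).sum ≤ m
        · obtain ⟨w, hw1, hw2⟩ := ih m hmlt (y :: t) hpos hc
          refine ⟨w, hw1, ?_⟩
          rw [show uSeq (k + 2) = uSeq m ++ [k + 2] ++ uSeq r from by rw [uSeq]]
          rw [List.append_assoc]
          exact hw2.trans ((uSeq m).sublist_append_left _)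
        · push_neg at hc
          obtain ⟨a, x, b, heq, h1, h2⟩ := uSeq_split (y :: t) m hc
          have hposa : ∀ z ∈ a, 0 < z := fun z hz => hpos z (by simp [heq, hz])
          have hposb : ∀ z ∈ b, 0 < z := fun z hz => hpos z (by simp [heq, hz])
          have hsumeq : a.sum + x + b.sum = (y :: t).sum := by
            rw [heq]; simp [List.sum_append, List.sum_cons]; ring
          have hbsum : b.sum ≤ r := by omega
          have hx : x ≤ k + 2 := by omega
          obtain ⟨w₁, hw11, hw12⟩ := ih m hmlt a hposa h1
          obtain ⟨w₂, hw21, hw22⟩ := ih r hrlt b hposb hbsum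
          refine ⟨w₁ ++ (k + 2) :: w₂, ?_, ?_⟩
          · rw [heq]
            exact List.rel_append hw11 (List.Forall₂.cons hx hw21)
          · rw [show uSeq (k + 2) = uSeq m ++ [k + 2] ++ uSeq r from by rw [uSeq]]
            rw [List.append_assoc]
            exact hw12.append (List.Sublist.cons₂ (k+2) hw22)
end

section
/- The universal sequence uₙ has size O(n log n): more precisely, the function s(n) = size of uₙ satisfies s(n) = s(⌊n/2⌋) + n + s(n−1−⌊n/2⌋), s(0) = 0, s(1) = 1, and s(n) ≤ C·n·(1 + log₂ n) for some absolute constant C and all n ≥ 1. -/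
/-- the size `s n = (uSeq n).sum` satisfies the recurrence
`s n = s ⌊n/2⌋ + n + s (n - 1 - ⌊n/2⌋)`, `s 0 = 0`, `s 1 = 1`, and is `O(n log n)`:
there is a constant `C` with `s n ≤ C * n * (1 + log₂ n)` for all `n ≥ 1`. -/
theorem uSeq_size_n_log_n :
    (uSeq 0).sum = 0 ∧ (uSeq 1).sum = 1 ∧
    (∀ n, 2 ≤ n → (uSeq n).sum = (uSeq (n / 2)).sum + n + (uSeq (n - 1 - n / 2)).sum) ∧
    ∃ C : ℕ, ∀ n, 1 ≤ n → (uSeq n).sum ≤ C * n * (1 + Nat.log 2 n) := by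
  have hrec : ∀ n, 2 ≤ n →
      (uSeq n).sum = (uSeq (n / 2)).sum + n + (uSeq (n - 1 - n / 2)).sum := by
    intro n hn
    obtain ⟨m, rfl⟩ : ∃ m, n = m + 2 := ⟨n - 2, by omega⟩
    rw [uSeq]
    simp [List.sum_append]
    omega
  have hbound : ∀ n, (uSeq n).sum ≤ n * (1 + Nat.log 2 n) := by
    intro n
    induction n using Nat.strong_induction_on with
    | _ n ih =>
      match n with
      | 0 => simp [uSeq]
      | 1 => simp [uSeq]
      | (m + 2) =>
        rw [hrec (m + 2) (by omega)]
        set a := (m + 2) / 2 with ha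
        set b := (m + 2) - 1 - (m + 2) / 2 with hb
        have iha := ih a (by omega)
        have ihb := ih b (by omega)
        set L := Nat.log 2 (m + 2) with hL
        have hL1 : 1 ≤ L := Nat.log_pos (by omega) (by omega)
        have hla : Nat.log 2 a ≤ L - 1 := by
          rw [hL, ← Nat.log_div_base]
        have hlb : Nat.log 2 b ≤ L - 1 := by
          calc Nat.log 2 b ≤ Nat.log 2 a := Nat.log_mono_right (by omega)
            _ ≤ L - 1 := hla
        have h1 : (uSeq a).sum ≤ a * L := by
          calc (uSeq a).sum ≤ a * (1 + Nat.log 2 a) := iha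
            _ ≤ a * L := Nat.mul_le_mul_left a (by omega)
        have h2 : (uSeq b).sum ≤ b * L := by
          calc (uSeq b).sum ≤ b * (1 + Nat.log 2 b) := ihb
            _ ≤ b * L := Nat.mul_le_mul_left b (by omega)
        have hab : a + b = m + 1 := by omega
        calc (uSeq a).sum + (m + 2) + (uSeq b).sum
            ≤ a * L + (m + 2) + b * L := by omega
          _ = (m + 1) * L + (m + 2) := by rw [← hab]; ring
          _ ≤ (m + 2) * (1 + L) := by nlinarith
  refine ⟨by simp [uSeq], by simp [uSeq], hrec, 1, fun n hn => ?_⟩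
  simpa using hbound n
end

section
/- Let F : ℕ × ℕ₊ → ℕ satisfy F(p,h) ≤ F(p,h−1) + 2·F(p−1,h) for p ≥ 1, h ≥ 2, with F(p,1) = 2^p and F(0,h) = 1. Then F(p,h) ≤ 2^p · C(p+h−1, p), where C denotes the binomial coefficient. -/
/-- if `F p h ≤ F p (h-1) + 2 * F (p-1) h` for `p ≥ 1, h ≥ 2`, with
`F p 1 = 2^p` and `F 0 h = 1` (for `h ≥ 1`), then `F p h ≤ 2^p * C(p+h-1, p)`. -/
theorem F_upper_bound (F : ℕ → ℕ → ℕ)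
    (hrec : ∀ p h, 1 ≤ p → 2 ≤ h → F p h ≤ F p (h - 1) + 2 * F (p - 1) h)
    (hbase1 : ∀ p, F p 1 = 2 ^ p)
    (hbase2 : ∀ h, 1 ≤ h → F 0 h = 1) :
    ∀ p h, 1 ≤ h → F p h ≤ 2 ^ p * Nat.choose (p + h - 1) p := by
  intro p
  induction p with
  | zero =>
    intro h hh
    rw [hbase2 h hh]
    simp
  | succ p ih =>
    intro h
    induction h with
    | zero => omega
    | succ n ihn =>
      intro _
      rcases Nat.eq_zero_or_pos n with hn | hn
      · subst hn
        rw [hbase1]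
        simp
      · have hr := hrec (p+1) (n+1) (by omega) (by omega)
        simp only [Nat.add_sub_cancel] at hr
        have h1 := ihn hn
        have h2 := ih (n+1) (by omega)
        have key : Nat.choose (p + n) (p + 1) + Nat.choose (p + n) p
            = Nat.choose (p + n + 1) (p + 1) := by
          rw [Nat.choose_succ_succ']; omega
        calc F (p+1) (n+1) ≤ F (p+1) n + 2 * F p (n+1) := hr
          _ ≤ 2^(p+1) * Nat.choose (p+1+n-1) (p+1) + 2 * (2^p * Nat.choose (p+(n+1)-1) p) :=
              Nat.add_le_add h1 (Nat.mul_le_mul_left 2 h2)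
          _ = 2^(p+1) * (Nat.choose (p+n) (p+1) + Nat.choose (p+n) p) := by
              have e1 : p+1+n-1 = p+n := by omega
              have e2 : p+(n+1)-1 = p+n := by omega
              rw [e1, e2]; ring
          _ = 2^(p+1) * Nat.choose (p+1+(n+1)-1) (p+1) := by
              have e3 : p+1+(n+1)-1 = p+n+1 := by omega
              rw [key, e3]
end

section
/- If a strongly connected finite graph G with edges labelled by vectors in ℤ^d satisfies the disjunction of mean payoff objectives ⋁_{i∈[1,d]} MP_i, then there exists a single coordinate i ∈ [1,d] such that every cycle of G has nonnegative total weight in coordinate i. -/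
/-!
Suppose every coordinate `i` has a cycle `Cᵢ` of negative total weight in `i`. Fix a vertex `v`
and, by strong connectivity, loops `v ⇝ Cᵢᴷ ⇝ v`. Visit the coordinates round-robin and, in each
round, pump the cycle so often that it dominates everything walked so far: the running average of
coordinate `i` then drops below `wᵢ(Cᵢ) / (2 |Cᵢ|) < 0` infinitely often. Only finitely many labels
occur, so the averages are bounded below and every liminf is negative: the resulting infinite path
violates every `MPᵢ`.
-/

open Filter Finset

lemma eventually_div_le_half_slope {S N b m : ℝ} (hN : 0 ≤ N) (hb : b < 0) (hm : 0 < m) :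
    ∀ᶠ K : ℝ in atTop, (S + K * b) / (N + K * m) ≤ b / (2 * m) := by
  have hbm : 0 < -(b * m) := by nlinarith
  filter_upwards [eventually_ge_atTop 1, eventually_ge_atTop ((2 * m * S - b * N) / -(b * m))]
    with K hK1 hK
  rw [div_le_div_iff₀ (by nlinarith) (by positivity)]
  nlinarith [(div_le_iff₀ hbm).1 hK]

lemma liminf_avg_le_of_frequently {x : ℕ → ℝ} {b : ℝ} (hx : BddBelow (Set.range x))
    (h : ∃ᶠ n in atTop, (∑ k ∈ range n, x k) / n ≤ b) :
    atTop.liminf (fun n : ℕ => (∑ k ∈ range n, x k) / n) ≤ b := by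
  obtain ⟨B, hB⟩ := hx
  refine liminf_le_of_frequently_le h (isBoundedUnder_of ⟨min B 0, fun n => ?_⟩)
  rcases n.eq_zero_or_pos with rfl | hn
  · simp
  · rw [ge_iff_le, le_div_iff₀ (by exact_mod_cast hn)]
    calc min B 0 * n ≤ B * n := by gcongr; exact min_le_left B 0
      _ = #(range n) • B := by simp [mul_comm]
      _ ≤ ∑ k ∈ range n, x k := card_nsmul_le_sum _ _ _ fun k _ => hB ⟨k, rfl⟩

-- Same encoding as the walks of the statement: only `vert k` for `k ≤ len` and `wt k` for
-- `k < len` are meaningful.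
structure FinPath (V W : Type*) where
  len : ℕ
  vert : ℕ → V
  wt : ℕ → W

namespace FinPath

variable {V W : Type*}

def Valid (E : V → W → V → Prop) (p : FinPath V W) : Prop :=
  ∀ k < p.len, E (p.vert k) (p.wt k) (p.vert (k + 1))

def src (p : FinPath V W) : V := p.vert 0

def tgt (p : FinPath V W) : V := p.vert p.len

def labels (p : FinPath V W) : Set W := p.wt '' Set.Iio p.len

def weight [AddCommMonoid W] (p : FinPath V W) : W := ∑ k ∈ range p.len, p.wt k

instance : Append (FinPath V W) where
  append p q :=
    { len := p.len + q.len
      vert := fun n => if n < p.len then p.vert n else q.vert (n - p.len)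
      wt := fun n => if n < p.len then p.wt n else q.wt (n - p.len) }

section Append

variable {p q : FinPath V W}

@[simp] lemma len_append : (p ++ q).len = p.len + q.len := rfl

lemma vert_append_of_le (h : p.tgt = q.src) {n : ℕ} (hn : n ≤ p.len) :
    (p ++ q).vert n = p.vert n := by
  rcases hn.lt_or_eq with hn | rfl
  · exact if_pos hn
  · exact (if_neg (lt_irrefl _)).trans (by simpa [src, tgt] using h.symm)

lemma vert_append_add (n : ℕ) : (p ++ q).vert (p.len + n) = q.vert n :=
  (if_neg (by omega)).trans (by rw [Nat.add_sub_cancel_left])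

lemma wt_append_of_lt {n : ℕ} (hn : n < p.len) : (p ++ q).wt n = p.wt n := if_pos hn

lemma wt_append_add (n : ℕ) : (p ++ q).wt (p.len + n) = q.wt n :=
  (if_neg (by omega)).trans (by rw [Nat.add_sub_cancel_left])

lemma src_append (h : p.tgt = q.src) : (p ++ q).src = p.src :=
  vert_append_of_le h (Nat.zero_le _)

@[simp] lemma tgt_append : (p ++ q).tgt = q.tgt := vert_append_add q.len

lemma weight_append [AddCommMonoid W] : (p ++ q).weight = p.weight + q.weight := by
  simp only [weight, len_append, sum_range_add, wt_append_add]
  congr 1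
  exact sum_congr rfl fun k hk => wt_append_of_lt (mem_range.mp hk)

lemma Valid.append {E : V → W → V → Prop} (hp : p.Valid E) (hq : q.Valid E)
    (h : p.tgt = q.src) : (p ++ q).Valid E := by
  intro k hk
  rcases lt_or_ge k p.len with hk' | hk'
  · rw [vert_append_of_le h hk'.le, wt_append_of_lt hk', vert_append_of_le h hk']
    exact hp k hk'
  · obtain ⟨j, rfl⟩ := Nat.exists_eq_add_of_le hk'
    rw [vert_append_add, wt_append_add, add_assoc, vert_append_add]
    exact hq j (by simpa using hk)

end Append

lemma finite_labels (p : FinPath V W) : p.labels.Finite := (Set.finite_Iio _).image _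

lemma Valid.restrict {E : V → W → V → Prop} {p : FinPath V W} {L : Set W} (hp : p.Valid E)
    (hL : p.labels ⊆ L) : p.Valid fun u w u' => E u w u' ∧ w ∈ L :=
  fun k hk => ⟨hp k hk, hL ⟨k, hk, rfl⟩⟩

def replicate (p : FinPath V W) : ℕ → FinPath V W
  | 0 => ⟨0, fun _ => p.src, p.wt⟩
  | K + 1 => p.replicate K ++ p

section Replicate

variable {p : FinPath V W}

@[simp] lemma len_replicate (K : ℕ) : (p.replicate K).len = K * p.len := by
  induction K with
  | zero => simp [replicate]
  | succ K ih => simp [replicate, ih, Nat.succ_mul]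

lemma tgt_replicate (hp : p.tgt = p.src) (K : ℕ) : (p.replicate K).tgt = p.src := by
  cases K with
  | zero => rfl
  | succ K => exact tgt_append.trans hp

lemma src_replicate (hp : p.tgt = p.src) (K : ℕ) : (p.replicate K).src = p.src := by
  induction K with
  | zero => rfl
  | succ K ih => exact (src_append (tgt_replicate hp K)).trans ih

lemma Valid.replicate {E : V → W → V → Prop} (hv : p.Valid E) (hp : p.tgt = p.src) (K : ℕ) :
    (p.replicate K).Valid E := by
  induction K with
  | zero => exact fun k hk => absurd hk (Nat.not_lt_zero k)
  | succ K ih => exact ih.append hv (tgt_replicate hp K)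

lemma weight_replicate [AddCommMonoid W] (K : ℕ) : (p.replicate K).weight = K • p.weight := by
  induction K with
  | zero => simp [replicate, weight]
  | succ K ih => rw [replicate, weight_append, ih, succ_nsmul]

end Replicate

def chain (p₀ : FinPath V W) (ext : ℕ → FinPath V W → FinPath V W) : ℕ → FinPath V W
  | 0 => p₀
  | t + 1 => chain p₀ ext t ++ ext t (chain p₀ ext t)

section Chain

variable {p₀ : FinPath V W} {ext : ℕ → FinPath V W → FinPath V W}

lemma chain_len_mono : Monotone fun t => (chain p₀ ext t).len :=
  monotone_nat_of_le_succ fun _ => Nat.le_add_right _ _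

lemma chain_len_strictMono (h : ∀ t p, 0 < (ext t p).len) :
    StrictMono fun t => (chain p₀ ext t).len :=
  strictMono_nat_of_lt_succ fun t => Nat.lt_add_of_pos_right (h t _)

lemma chain_wt_of_le {s t : ℕ} (hst : s ≤ t) {n : ℕ} (hn : n < (chain p₀ ext s).len) :
    (chain p₀ ext t).wt n = (chain p₀ ext s).wt n := by
  induction t, hst using Nat.le_induction with
  | base => rfl
  | succ t hst ih => exact (wt_append_of_lt (hn.trans_le (chain_len_mono hst))).trans ih

lemma chain_vert_of_le (h : ∀ t, (chain p₀ ext t).tgt = (ext t (chain p₀ ext t)).src)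
    {s t : ℕ} (hst : s ≤ t) {n : ℕ} (hn : n ≤ (chain p₀ ext s).len) :
    (chain p₀ ext t).vert n = (chain p₀ ext s).vert n := by
  induction t, hst using Nat.le_induction with
  | base => rfl
  | succ t hst ih => exact (vert_append_of_le (h t) (hn.trans (chain_len_mono hst))).trans ih

theorem exists_walk_of_chain {E : V → W → V → Prop} {v : V} (h₀ : p₀.Valid E)
    (h₀v : p₀.tgt = v)
    (hext : ∀ t p, (ext t p).Valid E ∧ (ext t p).src = v ∧ (ext t p).tgt = v ∧ 0 < (ext t p).len) :
    ∃ (π : ℕ → V) (c : ℕ → W), (∀ n, E (π n) (c n) (π (n + 1))) ∧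
      ∀ t, ∀ n < (chain p₀ ext t).len, c n = (chain p₀ ext t).wt n := by
  have htgt : ∀ t, (chain p₀ ext t).tgt = v := by
    rintro (_ | t)
    exacts [h₀v, tgt_append.trans (hext _ _).2.2.1]
  have hcompat : ∀ t, (chain p₀ ext t).tgt = (ext t (chain p₀ ext t)).src :=
    fun t => (htgt t).trans (hext _ _).2.1.symm
  have hvalid : ∀ t, (chain p₀ ext t).Valid E := by
    intro t
    induction t with
    | zero => exact h₀
    | succ t ih => exact ih.append (hext _ _).1 (hcompat t)
  have hlen : ∀ n, n < (chain p₀ ext (n + 1)).len := fun n =>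
    (chain_len_strictMono fun t p => (hext t p).2.2.2).id_le (n + 1)
  refine ⟨fun n => (chain p₀ ext (n + 1)).vert n, fun n => (chain p₀ ext (n + 1)).wt n,
    fun n => ?_, fun t n hn => ?_⟩
  · show E _ _ ((chain p₀ ext (n + 2)).vert (n + 1))
    rw [chain_vert_of_le hcompat (Nat.le_succ (n + 1)) (hlen n)]
    exact hvalid (n + 1) n (hlen n)
  · rcases le_total (n + 1) t with h | h
    · exact (chain_wt_of_le h (hlen n)).symm
    · exact chain_wt_of_le h hn

end Chain

section Pumping

variable {V ι : Type*} {E : V → (ι → ℤ) → V → Prop}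

theorem exists_loop_avg_le {P C R : FinPath V (ι → ℤ)} (hP : P.Valid E) (hC : C.Valid E)
    (hR : R.Valid E) (hPC : P.tgt = C.src) (hCC : C.tgt = C.src) (hCR : C.src = R.src)
    (hlen : 0 < C.len) {i : ι} (hneg : C.weight i < 0) (S : ℤ) (N : ℕ) :
    ∃ g : FinPath V (ι → ℤ), g.Valid E ∧ g.src = P.src ∧ g.tgt = R.tgt ∧ 0 < g.len ∧
      ((S + g.weight i : ℤ) : ℝ) / ((N + g.len : ℕ) : ℝ) ≤ C.weight i / (2 * C.len) := by
  obtain ⟨K, hK, hK1⟩ := ((tendsto_natCast_atTop_atTop.eventually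
    (eventually_div_le_half_slope (S := S + P.weight i + R.weight i)
      (N := N + P.len + R.len) (b := C.weight i) (m := C.len) (by positivity)
      (by exact_mod_cast hneg) (by exact_mod_cast hlen))).and (eventually_ge_atTop 1)).exists
  have hPK : P.tgt = (C.replicate K).src := hPC.trans (src_replicate hCC K).symm
  refine ⟨P ++ C.replicate K ++ R, (hP.append (hC.replicate hCC K) hPK).append hR
    (by rw [tgt_append, tgt_replicate hCC, hCR]), (src_append ?_).trans (src_append hPK),
    tgt_append, ?_, ?_⟩
  · rw [tgt_append, tgt_replicate hCC, hCR]
  · simp only [len_append, len_replicate]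
    have := Nat.mul_pos hK1 hlen
    omega
  · convert hK using 2
    · simp only [weight_append, weight_replicate, Pi.add_apply, nsmul_eq_mul, Pi.mul_apply,
        Pi.natCast_apply]
      push_cast
      ring
    · simp only [len_append, len_replicate]
      push_cast
      ring

theorem exists_walk_frequently_avg_le (v : V) (σ : ℕ → ι) (hσ : ∀ i, ∃ᶠ t in atTop, σ t = i)
    (ε : ι → ℝ)
    (hdrag : ∀ i (S : ℤ) (N : ℕ), ∃ g : FinPath V (ι → ℤ), g.Valid E ∧ g.src = v ∧ g.tgt = v ∧
      0 < g.len ∧ ((S + g.weight i : ℤ) : ℝ) / ((N + g.len : ℕ) : ℝ) ≤ ε i) :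
    ∃ (π : ℕ → V) (c : ℕ → ι → ℤ), (∀ n, E (π n) (c n) (π (n + 1))) ∧
      ∀ i, ∃ᶠ n in atTop, (∑ k ∈ range n, (c k i : ℝ)) / n ≤ ε i := by
  choose g hg using hdrag
  set ext : ℕ → FinPath V (ι → ℤ) → FinPath V (ι → ℤ) :=
    fun t p => g (σ t) (p.weight (σ t)) p.len
  set p₀ : FinPath V (ι → ℤ) := ⟨0, fun _ => v, fun _ => 0⟩
  have hext : ∀ t p, (ext t p).Valid E ∧ (ext t p).src = v ∧ (ext t p).tgt = v ∧
      0 < (ext t p).len := fun t p => ⟨(hg ..).1, (hg ..).2.1, (hg ..).2.2.1, (hg ..).2.2.2.1⟩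
  obtain ⟨π, c, hwalk, hc⟩ := exists_walk_of_chain (p₀ := p₀) (ext := ext)
    (fun k hk => absurd hk (Nat.not_lt_zero k)) rfl hext
  refine ⟨π, c, hwalk, fun i => ?_⟩
  have hsum : ∀ t, ∑ k ∈ range (chain p₀ ext t).len, (c k i : ℝ) = (chain p₀ ext t).weight i := by
    intro t
    rw [weight, Finset.sum_apply]
    push_cast
    exact sum_congr rfl fun k hk => by rw [hc t k (mem_range.mp hk)]
  have htend : Tendsto (fun t => (chain p₀ ext (t + 1)).len) atTop atTop :=
    (chain_len_strictMono fun t p => (hext t p).2.2.2).tendsto_atTop.comp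
      (tendsto_add_atTop_nat 1)
  refine htend.frequently ((hσ i).mono fun t ht => ?_)
  subst ht
  rw [hsum]
  simpa only [chain, weight_append, len_append, Pi.add_apply] using (hg ..).2.2.2.2

end Pumping

theorem exists_walk_liminf_avg_neg {V : Type*} {d : ℕ} (hd : 0 < d)
    {E : V → (Fin d → ℤ) → V → Prop}
    (hconn : ∀ u u' : V, ∃ p : FinPath V (Fin d → ℤ), p.Valid E ∧ p.src = u ∧ p.tgt = u')
    (hcyc : ∀ i, ∃ C : FinPath V (Fin d → ℤ),
      C.Valid E ∧ 0 < C.len ∧ C.tgt = C.src ∧ C.weight i < 0) :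
    ∃ (π : ℕ → V) (c : ℕ → Fin d → ℤ), (∀ n, E (π n) (c n) (π (n + 1))) ∧
      ∀ i, atTop.liminf (fun n : ℕ => (∑ k ∈ range n, (c k i : ℝ)) / n) < 0 := by
  choose C hCv hClen hCcl hCneg using hcyc
  set v := (C ⟨0, hd⟩).src
  choose P hPv hPs hPt using fun i => hconn v (C i).src
  choose R hRv hRs hRt using fun i => hconn (C i).src v
  -- restricting `E` to the finitely many labels of these walks keeps the averages bounded below
  set L := ⋃ i, (P i).labels ∪ (C i).labels ∪ (R i).labels
  have hL : L.Finite := Set.finite_iUnion fun i =>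
    ((P i).finite_labels.union (C i).finite_labels).union (R i).finite_labels
  have hσ : ∀ i : Fin d, ∃ᶠ t in atTop, (⟨t % d, Nat.mod_lt t hd⟩ : Fin d) = i := fun i =>
    (Nat.frequently_modEq hd.ne' i).mono fun t ht =>
      Fin.ext (Eq.trans ht (Nat.mod_eq_of_lt i.isLt))
  have hdrag : ∀ i (S : ℤ) (N : ℕ), ∃ g : FinPath V (Fin d → ℤ),
      g.Valid (fun u w u' => E u w u' ∧ w ∈ L) ∧ g.src = v ∧ g.tgt = v ∧ 0 < g.len ∧
      ((S + g.weight i : ℤ) : ℝ) / ((N + g.len : ℕ) : ℝ) ≤ (C i).weight i / (2 * (C i).len) := by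
    intro i S N
    obtain ⟨g, hg, hgs, hgt, hglen, hgavg⟩ := exists_loop_avg_le
      ((hPv i).restrict (L := L) fun w hw => Set.mem_iUnion.2 ⟨i, .inl (.inl hw)⟩)
      ((hCv i).restrict (L := L) fun w hw => Set.mem_iUnion.2 ⟨i, .inl (.inr hw)⟩)
      ((hRv i).restrict (L := L) fun w hw => Set.mem_iUnion.2 ⟨i, .inr hw⟩)
      (hPt i) (hCcl i) (hRs i).symm (hClen i) (hCneg i) S N
    exact ⟨g, hg, hgs.trans (hPs i), hgt.trans (hRt i), hglen, hgavg⟩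
  obtain ⟨π, c, hwalk, hfreq⟩ := exists_walk_frequently_avg_le v _ hσ _ hdrag
  refine ⟨π, c, fun n => (hwalk n).1, fun i => ?_⟩
  have hbdd : BddBelow (Set.range fun n => (c n i : ℝ)) :=
    (hL.image fun w => (w i : ℝ)).bddBelow.mono
      (Set.range_subset_iff.2 fun n => Set.mem_image_of_mem (fun w => (w i : ℝ)) (hwalk n).2)
  exact (liminf_avg_le_of_frequently hbdd (hfreq i)).trans_lt
    (div_neg_of_neg_of_pos (by exact_mod_cast hCneg i) (by have := hClen i; positivity))

end FinPath

theorem strongly_connected_disj_mean_payoff_general {V : Type*} {d : ℕ} (hd : 0 < d)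
    (E : V → (Fin d → ℤ) → V → Prop)
    (hconn : ∀ v v' : V, ∃ (m : ℕ) (π : ℕ → V) (c : ℕ → Fin d → ℤ),
      π 0 = v ∧ π m = v' ∧ ∀ k < m, E (π k) (c k) (π (k + 1)))
    (hsat : ∀ (π : ℕ → V) (c : ℕ → Fin d → ℤ),
      (∀ n, E (π n) (c n) (π (n + 1))) →
      ∃ i : Fin d,
        0 ≤ atTop.liminf (fun n : ℕ => (∑ k ∈ range n, (c k i : ℝ)) / n)) :
    ∃ i : Fin d, ∀ (m : ℕ) (π : ℕ → V) (c : ℕ → Fin d → ℤ),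
      0 < m → π 0 = π m → (∀ k < m, E (π k) (c k) (π (k + 1))) →
      0 ≤ ∑ k ∈ range m, c k i := by
  by_contra! hcyc
  obtain ⟨π, c, hwalk, hneg⟩ := FinPath.exists_walk_liminf_avg_neg hd
    (fun u u' => by
      obtain ⟨m, π, c, hs, ht, hw⟩ := hconn u u'
      exact ⟨⟨m, π, c⟩, hw, hs, ht⟩)
    (fun i => by
      obtain ⟨m, π, c, hm, hcl, hw, hw_neg⟩ := hcyc i
      exact ⟨⟨m, π, c⟩, hw, hm, hcl.symm, by rwa [FinPath.weight, Finset.sum_apply]⟩)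
  obtain ⟨i, hi⟩ := hsat π c hwalk
  exact (hi.trans_lt (hneg i)).false

/-- if a strongly connected finite graph with edges labelled in `ℤ^d`
(`d ≥ 1`) satisfies the disjunction of mean payoff objectives (every infinite path has
some coordinate whose liminf average is nonnegative), then there is a single coordinate
`i` in which every cycle has nonnegative total weight. -/
theorem strongly_connected_disj_mean_payoff {V : Type*} [Finite V] {d : ℕ} (hd : 0 < d)
    (E : V → (Fin d → ℤ) → V → Prop)
    (hconn : ∀ v v' : V, ∃ (m : ℕ) (π : ℕ → V) (c : ℕ → Fin d → ℤ),
      π 0 = v ∧ π m = v' ∧ ∀ k < m, E (π k) (c k) (π (k + 1)))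
    (hsat : ∀ (π : ℕ → V) (c : ℕ → Fin d → ℤ),
      (∀ n, E (π n) (c n) (π (n + 1))) →
      ∃ i : Fin d,
        0 ≤ atTop.liminf (fun n : ℕ => (∑ k ∈ range n, (c k i : ℝ)) / n)) :
    ∃ i : Fin d, ∀ (m : ℕ) (π : ℕ → V) (c : ℕ → Fin d → ℤ),
      0 < m → π 0 = π m → (∀ k < m, E (π k) (c k) (π (k + 1))) →
      0 ≤ ∑ k ∈ range m, c k i :=
  strongly_connected_disj_mean_payoff_general hd E hconn hsat
end

section
/- Right-composition in saturated graphs: if Ω is prefix-independent with neutral letter 0, G is saturated with respect to Ω, (v,c,v') ∈ E(G), and (v',0,v'') ∈ E(G), then (v,c,v'') ∈ E(G). -/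
namespace SatAux

def stA (bad : ℕ → Bool) : ℕ → ℕ × Bool
  | 0 => (0, false)
  | n+1 =>
    match stA bad n with
    | (i, false) => if bad i then (i, true) else (i+1, false)
    | (i, true) => (i+1, false)

def NA (bad : ℕ → Bool) : ℕ → ℕ
  | 0 => 0
  | i+1 => NA bad i + (if bad i then 2 else 1)

lemma stA_NA (bad : ℕ → Bool) : ∀ i, stA bad (NA bad i) = (i, false) := by
  intro i
  induction i with
  | zero => rfl
  | succ i ih =>
    by_cases h : bad i = true
    · have h1 : NA bad (i+1) = NA bad i + 1 + 1 := by simp [NA, h]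
      rw [h1]
      simp [stA, ih, h]
    · have h1 : NA bad (i+1) = NA bad i + 1 := by simp [NA, h]
      rw [h1]
      simp [stA, ih, h]

lemma NA_strictMono (bad : ℕ → Bool) : StrictMono (NA bad) := by
  apply strictMono_nat_of_lt_succ
  intro i
  by_cases h : bad i = true <;> simp [NA, h]

lemma stA_inv (bad : ℕ → Bool) : ∀ n,
    (∀ j, stA bad n = (j, false) → n = NA bad j) ∧
    (∀ j, stA bad n = (j, true) → bad j = true ∧ n = NA bad j + 1) := by
  intro n
  induction n with
  | zero =>
    refine ⟨fun j hj => ?_, fun j hj => ?_⟩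
    · simp only [stA, Prod.mk.injEq] at hj
      simp [← hj.1, NA]
    · simp [stA, Prod.mk.injEq] at hj
  | succ n ih =>
    rcases h : stA bad n with ⟨i, b⟩
    cases b with
    | false =>
      have hn : n = NA bad i := ih.1 i h
      by_cases hb : bad i = true
      · have hs : stA bad (n+1) = (i, true) := by simp [stA, h, hb]
        refine ⟨fun j hj => ?_, fun j hj => ?_⟩
        · rw [hs] at hj; simp at hj
        · rw [hs] at hj
          simp only [Prod.mk.injEq] at hj
          exact ⟨hj.1 ▸ hb, by rw [← hj.1, ← hn]⟩
      · have hs : stA bad (n+1) = (i+1, false) := by simp [stA, h, hb]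
        refine ⟨fun j hj => ?_, fun j hj => ?_⟩
        · rw [hs] at hj
          simp only [Prod.mk.injEq] at hj
          rw [← hj.1, hn]
          simp [NA, hb]
        · rw [hs] at hj; simp at hj
    | true =>
      obtain ⟨hb, hn⟩ := ih.2 i h
      have hs : stA bad (n+1) = (i+1, false) := by simp [stA, h]
      refine ⟨fun j hj => ?_, fun j hj => ?_⟩
      · rw [hs] at hj
        simp only [Prod.mk.injEq] at hj
        rw [← hj.1, hn]
        simp [NA, hb]
      · rw [hs] at hj; simp at hj

end SatAux

/-- right composition in saturated graphs. -/
theorem saturated_right_composition {V C : Type*} (Ω : Set (ℕ → C)) (z : C)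
    (hpi : PrefixIndependent Ω) (hz : Neutral z Ω)
    (E : V → C → V → Prop) (hsat : Saturated E Ω)
    (v v' v'' : V) (c : C) (h1 : E v c v') (h2 : E v' z v'') :
    E v c v'' := by
  classical
  by_contra hE
  obtain ⟨hsatE, hmax⟩ := hsat
  have hns := hmax v c v'' hE
  rw [Satisfies] at hns
  push_neg at hns
  obtain ⟨π, w, hw, hwΩ⟩ := hns
  set bad : ℕ → Bool := fun i => decide (¬ E (π i) (w i) (π (i+1))) with hbad
  have hbadF : ∀ i, bad i = false → E (π i) (w i) (π (i+1)) := by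
    intro i hi
    simpa [hbad] using hi
  have hbadT : ∀ i, bad i = true → π i = v ∧ w i = c ∧ π (i+1) = v'' := by
    intro i hi
    have hne : ¬ E (π i) (w i) (π (i+1)) := by simpa [hbad] using hi
    rcases hw i with h | h
    · exact absurd h hne
    · exact h
  set st : ℕ → ℕ × Bool := SatAux.stA bad with hst0
  set N : ℕ → ℕ := SatAux.NA bad with hN0
  set π' : ℕ → V := fun n => match st n with | (i, false) => π i | (_, true) => v' with hπ'
  set w' : ℕ → C := fun n => match st n with | (i, false) => w i | (_, true) => z with hw'0
  have hedge : ∀ n, E (π' n) (w' n) (π' (n+1)) := by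
    intro n
    rcases hst : st n with ⟨i, b⟩
    cases b with
    | false =>
      have e1 : π' n = π i := by simp [hπ', hst]
      have e2 : w' n = w i := by simp [hw'0, hst]
      by_cases hb : bad i = true
      · have hs : st (n+1) = (i, true) := by
          rw [hst0] at hst ⊢
          simp [SatAux.stA, hst, hb]
        have e3 : π' (n+1) = v' := by simp [hπ', hs]
        obtain ⟨ha, hb2, -⟩ := hbadT i hb
        rw [e1, e2, e3, ha, hb2]
        exact h1
      · have hs : st (n+1) = (i+1, false) := by
          rw [hst0] at hst ⊢
          simp [SatAux.stA, hst, hb]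
        have e3 : π' (n+1) = π (i+1) := by simp [hπ', hs]
        rw [e1, e2, e3]
        exact hbadF i (by simpa using hb)
    | true =>
      have hb : bad i = true := by
        rw [hst0] at hst
        exact ((SatAux.stA_inv bad n).2 i hst).1
      have hs : st (n+1) = (i+1, false) := by
        rw [hst0] at hst ⊢
        simp [SatAux.stA, hst]
      have e1 : π' n = v' := by simp [hπ', hst]
      have e2 : w' n = z := by simp [hw'0, hst]
      have e3 : π' (n+1) = π (i+1) := by simp [hπ', hs]
      rw [e1, e2, e3, (hbadT i hb).2.2]
      exact h2
  have hw'Ω : w' ∈ Ω := hsatE π' w' hedge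
  have hstN : ∀ i, st (N i) = (i, false) := by
    intro i; rw [hst0, hN0]; exact SatAux.stA_NA bad i
  have hwN : ∀ i, w' (N i) = w i := by
    intro i; simp [hw'0, hstN i]
  by_cases hfin : {i | w i ≠ z}.Finite
  · exact hwΩ ((hz w).1 hfin)
  · have hinf : {i | w i ≠ z}.Infinite := hfin
    set p : ℕ → Prop := fun i => w i ≠ z with hp
    set p' : ℕ → Prop := fun n => w' n ≠ z with hpp
    have hNmem : ∀ i, p i → p' (N i) := by
      intro i hi
      show w' (N i) ≠ z
      rw [hwN i]; exact hi
    have hsurj : ∀ n, p' n → ∃ i, p i ∧ N i = n := by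
      intro n hn
      rcases hst : st n with ⟨i, b⟩
      cases b with
      | true =>
        exfalso
        apply hn
        simp [hpp, hw'0, hst]
      | false =>
        refine ⟨i, ?_, ?_⟩
        · have : w' n = w i := by simp [hw'0, hst]
          show w i ≠ z
          rw [← this]; exact hn
        · rw [hst0] at hst
          exact ((SatAux.stA_inv bad n).1 i hst).symm
    have hNsm : StrictMono N := by rw [hN0]; exact SatAux.NA_strictMono bad
    have hinf' : {n | p' n}.Infinite := by
      have himg : N '' {i | p i} ⊆ {n | p' n} := by
        rintro _ ⟨i, hi, rfl⟩
        exact hNmem i hi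
      exact (hinf.image (hNsm.injective.injOn)).mono himg
    have hcount : ∀ i, Nat.count p' (N i) = Nat.count p i := by
      intro i
      induction i with
      | zero =>
        have : N 0 = 0 := rfl
        rw [this]
        simp
      | succ i ih =>
        have hiff : p' (N i) ↔ p i := by
          rw [hpp, hp]
          simp only [Set.mem_setOf_eq]
          rw [hwN i]
        by_cases hb : bad i = true
        · have hN1 : N (i+1) = N i + 1 + 1 := by
            rw [hN0]; simp [SatAux.NA, hb]
          have hs : st (N i + 1) = (i, true) := by
            rw [hst0]
            have := hstN i
            rw [hst0] at this
            simp [SatAux.stA, this, hb]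
          have hnz : ¬ p' (N i + 1) := by
            simp [hpp, hw'0, hs]
          rw [hN1, Nat.count_succ, Nat.count_succ, if_neg hnz, Nat.count_succ, ih]
          by_cases hpi : p i <;> simp [hiff, hpi]
        · have hN1 : N (i+1) = N i + 1 := by
            rw [hN0]; simp [SatAux.NA, hb]
          rw [hN1, Nat.count_succ, Nat.count_succ, ih]
          by_cases hpi : p i <;> simp [hiff, hpi]
    set f : ℕ → ℕ := Nat.nth p with hf
    set f' : ℕ → ℕ := Nat.nth p' with hf'
    have hf'N : ∀ j, f' j = N (f j) := by
      intro j
      have hpi : p (f j) := Nat.nth_mem_of_infinite hinf j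
      have hcnt : Nat.count p (f j) = j := Nat.count_nth_of_infinite hinf j
      have hp'N : p' (N (f j)) := hNmem _ hpi
      have hc2 : Nat.count p' (N (f j)) = j := by rw [hcount, hcnt]
      calc f' j = Nat.nth p' (Nat.count p' (N (f j))) := by rw [hc2]
        _ = N (f j) := Nat.nth_count hp'N
    have hmem1 : ∀ i, w i ≠ z ↔ ∃ j, f j = i := by
      intro i
      constructor
      · intro hi
        exact ⟨Nat.count p i, Nat.nth_count hi⟩
      · rintro ⟨j, rfl⟩
        exact Nat.nth_mem_of_infinite hinf j
    have hmem2 : ∀ n, w' n ≠ z ↔ ∃ j, f' j = n := by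
      intro n
      constructor
      · intro hn
        exact ⟨Nat.count p' n, Nat.nth_count hn⟩
      · rintro ⟨j, rfl⟩
        exact Nat.nth_mem_of_infinite hinf' j
    have e1 := (hz w).2 f (Nat.nth_strictMono hinf) hmem1
    have e2 := (hz w').2 f' (Nat.nth_strictMono hinf') hmem2
    have heq : (fun j => w' (f' j)) = fun j => w (f j) := by
      funext j
      rw [hf'N j, hwN]
    apply hwΩ
    apply e1.mpr
    rw [← heq]
    exact e2.mp hw'Ω
end
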